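/- arXiv:2504.10549 — 3 statements merged into one kernel-verified Lean document; each statement's English description precedes it below -/
import Mathlib

section
/- Let e₀ > 0 and let 0 < α₁ < α₂ be the two roots of y - ln y - 1 = e₀. If f : [0,1] → ℝ is integrable with f(x) > 0 a.e. and ∫₀¹ (f(x) - ln f(x) - 1) dx ≤ e₀, then α₁ ≤ ∫₀¹ f(x) dx ≤ α₂. -/
/-!
Let `M = ∫ f` and `φ y = y - log y - 1`. The tangent line of the concave function `log` at `M`
gives `log (f x) ≤ log M + f x / M - 1`; integrating yields `∫ log f ≤ log M`, i.e. Jensen's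
inequality `φ M ≤ ∫ φ ∘ f ≤ e₀`. Since `φ` is strictly convex with `φ α₁ = φ α₂ = e₀`, a point
outside `[α₁, α₂]` would put one of the roots strictly inside a segment whose endpoints have
`φ ≤ e₀`, forcing `φ < e₀` there.
-/

open MeasureTheory Set Real

lemma StrictConvexOn.mem_Icc_of_map_le {s : Set ℝ} {f : ℝ → ℝ} (hf : StrictConvexOn ℝ s f)
    {a b x : ℝ} (ha : a ∈ s) (hb : b ∈ s) (hx : x ∈ s) (hab : a < b) (hfab : f a = f b)
    (hfx : f x ≤ f a) : x ∈ Icc a b := by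
  by_contra hxab
  simp only [mem_Icc, not_and_or, not_le] at hxab
  rcases hxab with hxa | hbx
  · have hmem : a ∈ openSegment ℝ x b := by
      rw [openSegment_eq_Ioo (hxa.trans hab)]
      exact ⟨hxa, hab⟩
    have := hf.lt_on_openSegment hx hb (hxa.trans hab).ne hmem
    exact this.not_ge (max_le hfx hfab.ge)
  · have hmem : b ∈ openSegment ℝ a x := by
      rw [openSegment_eq_Ioo (hab.trans hbx)]
      exact ⟨hab, hbx⟩
    have := hf.lt_on_openSegment ha hx (hab.trans hbx).ne hmem
    exact this.not_ge (max_le hfab.le (hfx.trans hfab.le))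

lemma strictConvexOn_sub_log_sub_one : StrictConvexOn ℝ (Ioi 0) (fun y ↦ y - log y - 1) :=
  ((convexOn_id (convex_Ioi 0)).sub_strictConcaveOn strictConcaveOn_log_Ioi).add_const (-1)

section Integral

variable {α : Type*} [MeasurableSpace α] {μ : Measure α} {f : α → ℝ}

lemma integral_pos_of_ae_pos [NeZero μ] (hf : Integrable f μ) (hpos : ∀ᵐ x ∂μ, 0 < f x) :
    0 < ∫ x, f x ∂μ := by
  refine (integral_nonneg_of_ae (hpos.mono fun _ hx ↦ hx.le)).lt_of_ne fun h ↦ NeZero.ne μ ?_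
  have hzero : f =ᵐ[μ] 0 :=
    (integral_eq_zero_iff_of_nonneg_ae (hpos.mono fun _ hx ↦ hx.le) hf).mp h.symm
  have hfalse : ∀ᵐ _ ∂μ, False := by
    filter_upwards [hpos, hzero] with x hx hx0
    exact hx.ne' hx0
  exact ae_eq_bot.mp (Filter.eventually_false_iff_eq_bot.mp hfalse)

variable [IsProbabilityMeasure μ]

lemma integral_log_le_log_integral (hf : Integrable f μ) (hpos : ∀ᵐ x ∂μ, 0 < f x)
    (hlog : Integrable (fun x ↦ log (f x)) μ) : ∫ x, log (f x) ∂μ ≤ log (∫ x, f x ∂μ) := by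
  set M := ∫ x, f x ∂μ with hM_def
  have hM : 0 < M := integral_pos_of_ae_pos hf hpos
  have htangent : ∀ᵐ x ∂μ, log (f x) ≤ log M + (f x / M - 1) := by
    filter_upwards [hpos] with x hx
    have := log_le_sub_one_of_pos (div_pos hx hM)
    rwa [log_div hx.ne' hM.ne', sub_le_iff_le_add'] at this
  have hdiv : Integrable (fun x ↦ f x / M) μ := hf.div_const M
  have hshift : Integrable (fun x ↦ f x / M - 1) μ := hdiv.sub (integrable_const 1)
  calc ∫ x, log (f x) ∂μ ≤ ∫ x, (log M + (f x / M - 1)) ∂μ :=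
        integral_mono_ae hlog ((integrable_const _).add hshift) htangent
    _ = log M := by
        rw [integral_add (integrable_const _) hshift, integral_sub hdiv (integrable_const 1),
          integral_div, ← hM_def, div_self hM.ne']
        simp

lemma integral_sub_log_sub_one_le (hf : Integrable f μ) (hpos : ∀ᵐ x ∂μ, 0 < f x)
    (hφ : Integrable (fun x ↦ f x - log (f x) - 1) μ) :
    (∫ x, f x ∂μ) - log (∫ x, f x ∂μ) - 1 ≤ ∫ x, (f x - log (f x) - 1) ∂μ := by
  have hlog : Integrable (fun x ↦ log (f x)) μ :=
    ((hf.sub (integrable_const 1)).sub hφ).congr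
      (.of_forall fun x ↦ by simp only [Pi.sub_apply]; ring)
  have hsub : Integrable (fun x ↦ f x - log (f x)) μ := hf.sub hlog
  rw [integral_sub hsub (integrable_const 1), integral_sub hf hlog]
  simp only [integral_const, probReal_univ, smul_eq_mul, one_mul]
  linarith [integral_log_le_log_integral hf hpos hlog]

end Integral

theorem stmt0_general (e₀ α₁ α₂ : ℝ) (hα1 : 0 < α₁) (hα12 : α₁ < α₂)
    (hroot1 : α₁ - Real.log α₁ - 1 = e₀) (hroot2 : α₂ - Real.log α₂ - 1 = e₀)
    (f : ℝ → ℝ) (hf : IntegrableOn f (Icc (0:ℝ) 1))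
    (hfpos : ∀ᵐ x ∂(volume.restrict (Icc (0:ℝ) 1)), 0 < f x)
    (hfint : IntegrableOn (fun x => f x - Real.log (f x) - 1) (Icc (0:ℝ) 1))
    (hbound : ∫ x in Icc (0:ℝ) 1, (f x - Real.log (f x) - 1) ≤ e₀) :
    α₁ ≤ ∫ x in Icc (0:ℝ) 1, f x ∧ ∫ x in Icc (0:ℝ) 1, f x ≤ α₂ := by
  have : IsProbabilityMeasure (volume.restrict (Icc (0:ℝ) 1)) := ⟨by simp⟩
  have hjensen := integral_sub_log_sub_one_le hf hfpos hfint
  exact strictConvexOn_sub_log_sub_one.mem_Icc_of_map_le hα1 (hα1.trans hα12)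
    (integral_pos_of_ae_pos hf hfpos) hα12 (hroot1.trans hroot2.symm)
    (by linarith)

theorem stmt0 (e₀ α₁ α₂ : ℝ) (he₀ : 0 < e₀) (hα1 : 0 < α₁) (hα12 : α₁ < α₂)
    (hroot1 : α₁ - Real.log α₁ - 1 = e₀) (hroot2 : α₂ - Real.log α₂ - 1 = e₀)
    (f : ℝ → ℝ) (hf : IntegrableOn f (Icc (0:ℝ) 1))
    (hfpos : ∀ᵐ x ∂(volume.restrict (Icc (0:ℝ) 1)), 0 < f x)
    (hfint : IntegrableOn (fun x => f x - Real.log (f x) - 1) (Icc (0:ℝ) 1))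
    (hbound : ∫ x in Icc (0:ℝ) 1, (f x - Real.log (f x) - 1) ≤ e₀) :
    α₁ ≤ ∫ x in Icc (0:ℝ) 1, f x ∧ ∫ x in Icc (0:ℝ) 1, f x ≤ α₂ :=
  stmt0_general e₀ α₁ α₂ hα1 hα12 hroot1 hroot2 f hf hfpos hfint hbound
end

section
/- Let v : [0,∞) → [0,∞) be such that there exist constants C > 0, α₁ > 0 with v(t) ≥ C⁻¹ ∫_0^t e^{-(t-s)/C} (α₁/4 - C V(s)) ds for all t, where V ≥ 0 is integrable on [0,∞). Then there exist T₀ > 0 and C₀ > 0 (depending only on C, α₁, ∫_0^∞ V) such that v(t) ≥ C₀/2 for all t ≥ T₀. -/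
/-!
The lower bound equals `(α₁/4) (1 - e^{-t/C}) - ∫₀ᵗ e^{-(t-s)/C} V(s) ds`. The first term tends
to `α₁/4`. The second tends to `0` by dominated convergence: its integrand, extended by zero for
`s > t`, is dominated by `|V|` and tends to `0` pointwise. Hence the lower bound exceeds `α₁/8`
for all large `t`.
-/

open MeasureTheory Set Filter Real Topology

lemma integral_Icc_exp_neg_sub_div {C : ℝ} (hC : C ≠ 0) {t : ℝ} (ht : 0 ≤ t) :
    ∫ s in Icc (0:ℝ) t, exp (-(t - s) / C) = C * (1 - exp (-t / C)) := by
  have hsplit : ∀ s, exp (-(t - s) / C) = exp (-t / C) * exp (s / C) := fun s => by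
    rw [← exp_add]; congr 1; ring
  rw [integral_Icc_eq_integral_Ioc, ← intervalIntegral.integral_of_le ht]
  simp_rw [hsplit]
  rw [intervalIntegral.integral_const_mul, intervalIntegral.integral_comp_div exp hC, integral_exp,
    zero_div, exp_zero, smul_eq_mul]
  have hinv : exp (-t / C) * exp (t / C) = 1 := by rw [← exp_add, neg_div, neg_add_cancel, exp_zero]
  linear_combination C * hinv

lemma integrableOn_exp_neg_sub_div_mul {C : ℝ} (hC : 0 < C) {V : ℝ → ℝ} {t : ℝ}
    (hV : IntegrableOn V (Icc 0 t)) :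
    IntegrableOn (fun s => exp (-(t - s) / C) * V s) (Icc 0 t) := by
  refine hV.bdd_mul (c := 1) (by fun_prop) ?_
  filter_upwards [ae_restrict_mem measurableSet_Icc] with s hs
  rw [norm_of_nonneg (exp_pos _).le, exp_le_one_iff]
  exact div_nonpos_of_nonpos_of_nonneg (by linarith [hs.2]) hC.le

lemma tendsto_integral_Icc_exp_neg_sub_div_mul_atTop {C : ℝ} (hC : 0 < C) {V : ℝ → ℝ}
    (hV : IntegrableOn V (Ici 0)) :
    Tendsto (fun t => ∫ s in Icc (0:ℝ) t, exp (-(t - s) / C) * V s) atTop (𝓝 0) := by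
  set F : ℝ → ℝ → ℝ := fun t => (Iic t).indicator fun s => exp (-(t - s) / C) * V s
  have hF_meas : ∀ t, AEStronglyMeasurable (F t) (volume.restrict (Ici 0)) := fun t =>
    ((by fun_prop : Continuous fun s => exp (-(t - s) / C)).aestronglyMeasurable.mul
      hV.aestronglyMeasurable).indicator measurableSet_Iic
  have hF_le : ∀ t s, ‖F t s‖ ≤ ‖V s‖ := fun t s => by
    dsimp only [F]
    by_cases hs : s ∈ Iic t
    · rw [indicator_of_mem hs, norm_mul, norm_of_nonneg (exp_pos _).le]
      refine mul_le_of_le_one_left (norm_nonneg _) (exp_le_one_iff.2 ?_)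
      exact div_nonpos_of_nonpos_of_nonneg (by linarith [mem_Iic.1 hs]) hC.le
    · rw [indicator_of_notMem hs, norm_zero]
      exact norm_nonneg _
  have hF_lim : ∀ s, Tendsto (fun t => F t s) atTop (𝓝 0) := fun s => by
    have hexp : Tendsto (fun t => exp (-(t - s) / C)) atTop (𝓝 0) := by
      have : Tendsto (fun t => (t - s) / C) atTop atTop :=
        (tendsto_atTop_add_const_right _ _ tendsto_id).atTop_div_const hC
      simpa only [neg_div, Function.comp_def] using tendsto_exp_neg_atTop_nhds_zero.comp this
    refine (zero_mul (V s) ▸ hexp.mul_const (V s)).congr' ?_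
    filter_upwards [eventually_ge_atTop s] with t hst
    dsimp only [F]
    rw [indicator_of_mem (mem_Iic.2 hst)]
  have hlim := tendsto_integral_filter_of_dominated_convergence (fun s => ‖V s‖)
    (.of_forall hF_meas) (.of_forall fun t => .of_forall (hF_le t)) hV.norm (.of_forall hF_lim)
  rw [integral_zero] at hlim
  refine hlim.congr fun t => ?_
  rw [setIntegral_indicator measurableSet_Iic, Ici_inter_Iic]

lemma tendsto_inv_mul_integral_Icc_exp_neg_sub_div_mul_sub_atTop {C : ℝ} (hC : 0 < C) (a : ℝ)
    {V : ℝ → ℝ} (hV : IntegrableOn V (Ici 0)) :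
    Tendsto (fun t => C⁻¹ * ∫ s in Icc (0:ℝ) t, exp (-(t - s) / C) * (a - C * V s))
      atTop (𝓝 a) := by
  have hexp : Tendsto (fun t => exp (-t / C)) atTop (𝓝 0) := by
    simpa only [neg_div, Function.comp_def, id] using
      tendsto_exp_neg_atTop_nhds_zero.comp (tendsto_id.atTop_div_const hC)
  have hlim := (tendsto_const_nhds (x := a)).mul ((tendsto_const_nhds (x := 1)).sub hexp) |>.sub
    (tendsto_integral_Icc_exp_neg_sub_div_mul_atTop hC hV)
  simp only [sub_zero, mul_one] at hlim
  refine hlim.congr' ?_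
  filter_upwards [eventually_ge_atTop 0] with t ht
  have hsplit : ∫ s in Icc (0:ℝ) t, exp (-(t - s) / C) * (a - C * V s)
      = a * (∫ s in Icc (0:ℝ) t, exp (-(t - s) / C))
        - C * ∫ s in Icc (0:ℝ) t, exp (-(t - s) / C) * V s := by
    have hk : IntegrableOn (fun s => a * exp (-(t - s) / C)) (Icc 0 t) :=
      (continuous_const.mul (by fun_prop)).integrableOn_Icc
    have hkV := (integrableOn_exp_neg_sub_div_mul hC (t := t)
      (hV.mono_set Icc_subset_Ici_self)).const_mul C
    rw [← integral_const_mul, ← integral_const_mul, ← integral_sub hk hkV]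
    exact integral_congr_ae (.of_forall fun s => by ring)
  rw [hsplit, integral_Icc_exp_neg_sub_div hC.ne' ht]
  field_simp

theorem stmt8_general (C α₁ : ℝ) (hC : 0 < C) (hα₁ : 0 < α₁) (V : ℝ → ℝ)
    (hVint : IntegrableOn V (Ici (0:ℝ))) :
    ∃ T₀ C₀ : ℝ, 0 < T₀ ∧ 0 < C₀ ∧
      ∀ v : ℝ → ℝ, (∀ t, 0 ≤ v t) →
        (∀ t : ℝ, 0 ≤ t →
          C⁻¹ * ∫ s in Icc (0:ℝ) t, Real.exp (-(t - s) / C) * (α₁ / 4 - C * V s) ≤ v t) →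
        ∀ t, T₀ ≤ t → C₀ / 2 ≤ v t := by
  obtain ⟨T, hT⟩ := eventually_atTop.1 <|
    (tendsto_inv_mul_integral_Icc_exp_neg_sub_div_mul_sub_atTop hC (α₁ / 4) hVint).eventually
      (eventually_ge_nhds (by linarith : α₁ / 8 < α₁ / 4))
  refine ⟨max T 1, α₁ / 4, by positivity, by positivity, fun v _ hv t ht => ?_⟩
  have ht0 : 0 ≤ t := by linarith [le_max_right T 1]
  calc α₁ / 4 / 2 ≤ _ := by linarith [hT t (le_of_max_le_left ht)]
    _ ≤ v t := hv t ht0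

theorem stmt8 (C α₁ : ℝ) (hC : 0 < C) (hα₁ : 0 < α₁) (V : ℝ → ℝ)
    (hV : ∀ t, 0 ≤ V t) (hVint : IntegrableOn V (Ici (0:ℝ))) :
    ∃ T₀ C₀ : ℝ, 0 < T₀ ∧ 0 < C₀ ∧
      ∀ v : ℝ → ℝ, (∀ t, 0 ≤ v t) →
        (∀ t : ℝ, 0 ≤ t →
          C⁻¹ * ∫ s in Icc (0:ℝ) t, Real.exp (-(t - s) / C) * (α₁ / 4 - C * V s) ≤ v t) →
        ∀ t, T₀ ≤ t → C₀ / 2 ≤ v t :=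
  stmt8_general C α₁ hC hα₁ V hVint
end

section
/- Let a, b : [0,∞) → [0,∞) be locally integrable with ∫_0^T a dt ≤ A and ∫_0^T b dt ≤ B for all T, and let y : [0,T] → [0,∞) be absolutely continuous satisfying y'(t) ≤ a(t) + b(t) y(t) + C₁ y(t)² for a.e. t, with ∫_0^T y(t) dt ≤ D. Then sup_{0≤t≤T} y(t) ≤ C, with C depending only on y(0), A, B, C₁, D (but not on T). -/
/-!
Absorb the quadratic term into the linear coefficient: with `h = b + C₁ y` one has
`y' ≤ a + h y`, and `∫₀ᵀ h ≤ B + C₁ D` whatever `T` is. On an interval `[s, t]` with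
`∫ₛᵗ h ≤ 1/2`, the maximum `M` of `y` there satisfies `M ≤ y s + A + M / 2`, so `y + 2A`
at most doubles across it. `[0, T]` is covered by `⌈2 (B + C₁ D)⌉ + 1` such intervals, which
bounds `y` independently of `T`.
-/

open MeasureTheory Set Filter

theorem sub_le_integral_of_hasDerivAt_of_ae_le {g g' φ : ℝ → ℝ} {a b : ℝ} (hab : a ≤ b)
    (hderiv : ∀ x ∈ Icc a b, HasDerivAt g (g' x) x) (hφ : IntegrableOn φ (Icc a b))
    (hle : ∀ᵐ x ∂volume.restrict (Icc a b), g' x ≤ φ x) :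
    g b - g a ≤ ∫ x in a..b, φ x := by
  -- the FTC inequality wants `g' ≤ φ` everywhere: `max φ g'` has that and is `φ` a.e.
  have hmax : (fun x ↦ max (φ x) (g' x)) =ᵐ[volume.restrict (Icc a b)] φ := by
    filter_upwards [hle] with x hx using max_eq_left hx
  calc g b - g a ≤ ∫ x in a..b, max (φ x) (g' x) :=
        intervalIntegral.sub_le_integral_of_hasDeriv_right_of_le hab
          (fun x hx ↦ (hderiv x hx).continuousAt.continuousWithinAt)
          (fun x hx ↦ (hderiv x (Ioo_subset_Icc_self hx)).hasDerivWithinAt)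
          (hφ.congr hmax.symm) (fun _ _ ↦ le_max_right _ _)
    _ = ∫ x in a..b, φ x := by
        rw [intervalIntegral.integral_of_le hab, intervalIntegral.integral_of_le hab]
        exact integral_congr_ae <|
          ae_restrict_of_ae_restrict_of_subset Ioc_subset_Icc_self hmax

theorem intervalIntegral_le_setIntegral_Icc {f : ℝ → ℝ} {a b s t : ℝ}
    (hf : IntegrableOn f (Icc a b)) (hf0 : ∀ x ∈ Icc a b, 0 ≤ f x)
    (has : a ≤ s) (hst : s ≤ t) (htb : t ≤ b) :
    ∫ x in s..t, f x ≤ ∫ x in Icc a b, f x := by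
  rw [intervalIntegral.integral_of_le hst]
  exact setIntegral_mono_set hf ((ae_restrict_iff' measurableSet_Icc).2 (.of_forall hf0))
    (Ioc_subset_Icc_self.trans (Icc_subset_Icc has htb)).eventuallyLE

theorem one_sub_mul_le_of_sub_le_add_integral_mul {y h : ℝ → ℝ} {s t A θ : ℝ}
    (hst : s ≤ t) (hy : ContinuousOn y (Icc s t)) (hy0 : ∀ u ∈ Icc s t, 0 ≤ y u)
    (hh : ∀ u ∈ Icc s t, 0 ≤ h u) (hhi : IntegrableOn h (Icc s t))
    (hθ : ∫ u in s..t, h u ≤ θ) (hθ1 : θ ≤ 1)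
    (hgrowth : ∀ u ∈ Icc s t, y u - y s ≤ A + ∫ v in s..u, h v * y v) :
    ∀ u ∈ Icc s t, (1 - θ) * y u ≤ y s + A := by
  obtain ⟨m, hm, hmax⟩ := isCompact_Icc.exists_isMaxOn (nonempty_Icc.2 hst) hy
  have hsub : Icc s m ⊆ Icc s t := Icc_subset_Icc le_rfl hm.2
  have hIoc : Ioc s m ⊆ Icc s t := Ioc_subset_Icc_self.trans hsub
  have hhm : IntervalIntegrable h volume s m :=
    (intervalIntegrable_iff_integrableOn_Ioc_of_le hm.1).2 (hhi.mono_set hIoc)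
  have hhym : IntervalIntegrable (fun v ↦ h v * y v) volume s m :=
    (intervalIntegrable_iff_integrableOn_Ioc_of_le hm.1).2
      ((hhi.mul_continuousOn hy isCompact_Icc).mono_set hIoc)
  have hint : ∫ v in s..m, h v * y v ≤ θ * y m :=
    calc ∫ v in s..m, h v * y v ≤ ∫ v in s..m, h v * y m :=
          intervalIntegral.integral_mono_on hm.1 hhym (hhm.mul_const _) fun v hv ↦
            mul_le_mul_of_nonneg_left (hmax (hsub hv)) (hh v (hsub hv))
      _ = (∫ v in s..m, h v) * y m := intervalIntegral.integral_mul_const _ _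
      _ ≤ (∫ v in s..t, h v) * y m := by
          refine mul_le_mul_of_nonneg_right ?_ (hy0 m hm)
          refine intervalIntegral.integral_mono_interval le_rfl hm.1 hm.2 ?_
            ((intervalIntegrable_iff_integrableOn_Icc_of_le hst).2 hhi)
          exact (ae_restrict_iff' measurableSet_Ioc).2
            (.of_forall fun v hv ↦ hh v (Ioc_subset_Icc_self hv))
      _ ≤ θ * y m := mul_le_mul_of_nonneg_right hθ (hy0 m hm)
  intro u hu
  have := hgrowth m hm
  linarith [mul_le_mul_of_nonneg_left (hmax hu) (sub_nonneg.2 hθ1)]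

theorem exists_intervalIntegral_eq {f : ℝ → ℝ} {a b c : ℝ} (hab : a ≤ b)
    (hf : IntegrableOn f (Icc a b)) (hc : c ∈ Icc 0 (∫ x in a..b, f x)) :
    ∃ s ∈ Icc a b, ∫ x in a..s, f x = c := by
  have hcont := intervalIntegral.continuousOn_primitive_interval (a := a) (b := b)
    (by rwa [uIcc_of_le hab])
  rw [uIcc_of_le hab] at hcont
  exact intermediate_value_Icc hab hcont (by simpa using hc)

section Gronwall

variable {y h : ℝ → ℝ} {A T : ℝ}

theorem sub_le_add_integral_mul_of_deriv_le {y' a : ℝ → ℝ}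
    (hderiv : ∀ t ∈ Icc 0 T, HasDerivAt y (y' t) t) (ha : ∀ t ∈ Icc 0 T, 0 ≤ a t)
    (hai : IntegrableOn a (Icc 0 T)) (haA : ∫ t in Icc 0 T, a t ≤ A)
    (hhi : IntegrableOn h (Icc 0 T))
    (hle : ∀ᵐ t ∂volume.restrict (Icc 0 T), y' t ≤ a t + h t * y t) :
    ∀ s t, 0 ≤ s → s ≤ t → t ≤ T → y t - y s ≤ A + ∫ u in s..t, h u * y u := by
  intro s t hs hst htT
  have hsub : Icc s t ⊆ Icc 0 T := Icc_subset_Icc hs htT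
  have hai' : IntegrableOn a (Icc s t) := hai.mono_set hsub
  have hhy : IntegrableOn (fun u ↦ h u * y u) (Icc s t) :=
    (hhi.mono_set hsub).mul_continuousOn
      (fun u hu ↦ (hderiv u (hsub hu)).continuousAt.continuousWithinAt) isCompact_Icc
  have hFTC := sub_le_integral_of_hasDerivAt_of_ae_le (φ := fun u ↦ a u + h u * y u) hst
    (fun u hu ↦ hderiv u (hsub hu)) (hai'.add hhy)
    (ae_restrict_of_ae_restrict_of_subset hsub hle)
  rw [intervalIntegral.integral_add
    ((intervalIntegrable_iff_integrableOn_Icc_of_le hst).2 hai')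
    ((intervalIntegrable_iff_integrableOn_Icc_of_le hst).2 hhy)] at hFTC
  linarith [intervalIntegral_le_setIntegral_Icc hai ha hs hst htT]

theorem add_two_mul_le_two_pow_of_integral_le_half (hy : ContinuousOn y (Icc 0 T))
    (hy0 : ∀ t ∈ Icc 0 T, 0 ≤ y t) (hh : ∀ t ∈ Icc 0 T, 0 ≤ h t)
    (hhi : IntegrableOn h (Icc 0 T))
    (hgrowth : ∀ s t, 0 ≤ s → s ≤ t → t ≤ T →
      y t - y s ≤ A + ∫ u in s..t, h u * y u)
    (n : ℕ) : ∀ t ∈ Icc 0 T, ∫ u in 0..t, h u ≤ n / 2 →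
      y t + 2 * A ≤ 2 ^ (n + 1) * (y 0 + 2 * A) := by
  have hint : ∀ t ∈ Icc 0 T, IntervalIntegrable h volume 0 t := fun t ht ↦
    (intervalIntegrable_iff_integrableOn_Icc_of_le ht.1).2
      (hhi.mono_set (Icc_subset_Icc le_rfl ht.2))
  have chunk : ∀ s t, 0 ≤ s → s ≤ t → t ≤ T → ∫ u in s..t, h u ≤ 1 / 2 →
      y t ≤ 2 * (y s + A) := fun s t hs hst htT hhalf ↦ by
    have hsub : Icc s t ⊆ Icc 0 T := Icc_subset_Icc hs htT
    have := one_sub_mul_le_of_sub_le_add_integral_mul hst (hy.mono hsub)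
      (fun u hu ↦ hy0 u (hsub hu)) (fun u hu ↦ hh u (hsub hu)) (hhi.mono_set hsub) hhalf
      (by norm_num)
      (fun u hu ↦ hgrowth s u hs hu.1 (hu.2.trans htT)) t ⟨hst, le_rfl⟩
    linarith
  induction n with
  | zero =>
    intro t ht hG
    have := chunk 0 t le_rfl ht.1 ht.2 (hG.trans (by norm_num))
    norm_num
    linarith
  | succ n ih =>
    intro t ht hG
    have hA : 0 ≤ A := by simpa using hgrowth 0 0 le_rfl le_rfl (ht.1.trans ht.2)
    have hpos : 0 ≤ y 0 + 2 * A := by linarith [hy0 0 ⟨le_rfl, ht.1.trans ht.2⟩]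
    have hpow : (2 : ℝ) ^ (n + 1 + 1) = 2 * 2 ^ (n + 1) := by ring
    by_cases hGn : ∫ u in 0..t, h u ≤ n / 2
    · nlinarith [ih t ht hGn, pow_pos (two_pos (α := ℝ)) (n + 1)]
    obtain ⟨s, hs, hGs⟩ := exists_intervalIntegral_eq ht.1
      (hhi.mono_set (Icc_subset_Icc le_rfl ht.2)) ⟨by positivity, (not_le.1 hGn).le⟩
    have hsT : s ∈ Icc 0 T := ⟨hs.1, hs.2.trans ht.2⟩
    have hhalf : ∫ u in s..t, h u ≤ 1 / 2 := by
      rw [← intervalIntegral.integral_interval_sub_left (hint t ht) (hint s hsT)]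
      push_cast at hG
      linarith
    nlinarith [chunk s t hs.1 hs.2 ht.2 hhalf, ih s hsT hGs.le]

theorem add_two_mul_le_two_pow_of_integral_le (hy : ContinuousOn y (Icc 0 T))
    (hy0 : ∀ t ∈ Icc 0 T, 0 ≤ y t) (hh : ∀ t ∈ Icc 0 T, 0 ≤ h t)
    (hhi : IntegrableOn h (Icc 0 T))
    (hgrowth : ∀ s t, 0 ≤ s → s ≤ t → t ≤ T →
      y t - y s ≤ A + ∫ u in s..t, h u * y u)
    {K : ℝ} (hK : ∫ u in Icc 0 T, h u ≤ K) :
    ∀ t ∈ Icc 0 T, y t + 2 * A ≤ 2 ^ (⌈2 * K⌉₊ + 1) * (y 0 + 2 * A) := fun t ht ↦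
  add_two_mul_le_two_pow_of_integral_le_half hy hy0 hh hhi hgrowth _ t ht <| by
    have := Nat.le_ceil (2 * K)
    linarith [intervalIntegral_le_setIntegral_Icc hhi hh le_rfl ht.1 ht.2]

end Gronwall

theorem stmt17_general (y0 A B C₁ D : ℝ) (hy0 : 0 ≤ y0) (hA : 0 ≤ A)
    (hC₁ : 0 < C₁) :
    ∃ C : ℝ, 0 < C ∧
      ∀ (T : ℝ) (a b y y' : ℝ → ℝ), 0 < T →
        (∀ t, 0 ≤ a t) → (∀ t, 0 ≤ b t) → (∀ t, 0 ≤ y t) →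
        IntegrableOn a (Icc (0:ℝ) T) → IntegrableOn b (Icc (0:ℝ) T) →
        IntegrableOn y (Icc (0:ℝ) T) →
        (∫ t in Icc (0:ℝ) T, a t) ≤ A → (∫ t in Icc (0:ℝ) T, b t) ≤ B →
        (∫ t in Icc (0:ℝ) T, y t) ≤ D →
        (∀ t ∈ Icc (0:ℝ) T, HasDerivAt y (y' t) t) →
        (∀ᵐ t ∂(volume.restrict (Icc (0:ℝ) T)),
          y' t ≤ a t + b t * y t + C₁ * (y t) ^ 2) →
        y 0 ≤ y0 →
        ∀ t ∈ Icc (0:ℝ) T, y t ≤ C := by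
  refine ⟨2 ^ (⌈2 * (B + C₁ * D)⌉₊ + 1) * (y0 + 2 * A) + 1, by positivity, ?_⟩
  intro T a b y y' _ ha hb hy hai hbi hyi haA hbB hyD hderiv hode hy00 t ht
  set h : ℝ → ℝ := fun t ↦ b t + C₁ * y t
  have hh : ∀ t, 0 ≤ h t := fun t ↦ by have := hb t; have := hy t; positivity
  have hhi : IntegrableOn h (Icc 0 T) := hbi.add (hyi.const_mul C₁)
  have hhK : ∫ u in Icc 0 T, h u ≤ B + C₁ * D := by
    rw [integral_add hbi (hyi.const_mul C₁), integral_const_mul]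
    linarith [mul_le_mul_of_nonneg_left hyD hC₁.le]
  have hgrowth := sub_le_add_integral_mul_of_deriv_le hderiv (fun u _ ↦ ha u) hai haA hhi <| by
    filter_upwards [hode] with u hu
    linarith
  have hycont : ContinuousOn y (Icc 0 T) := fun u hu ↦
    (hderiv u hu).continuousAt.continuousWithinAt
  calc y t ≤ y t + 2 * A := by linarith
    _ ≤ 2 ^ (⌈2 * (B + C₁ * D)⌉₊ + 1) * (y 0 + 2 * A) :=
      add_two_mul_le_two_pow_of_integral_le hycont (fun u _ ↦ hy u) (fun u _ ↦ hh u) hhi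
        hgrowth hhK t ht
    _ ≤ 2 ^ (⌈2 * (B + C₁ * D)⌉₊ + 1) * (y0 + 2 * A) := by gcongr
    _ ≤ _ := le_add_of_nonneg_right zero_le_one

theorem stmt17 (y0 A B C₁ D : ℝ) (hy0 : 0 ≤ y0) (hA : 0 ≤ A) (hB : 0 ≤ B)
    (hC₁ : 0 < C₁) (hD : 0 ≤ D) :
    ∃ C : ℝ, 0 < C ∧
      ∀ (T : ℝ) (a b y y' : ℝ → ℝ), 0 < T →
        (∀ t, 0 ≤ a t) → (∀ t, 0 ≤ b t) → (∀ t, 0 ≤ y t) →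
        IntegrableOn a (Icc (0:ℝ) T) → IntegrableOn b (Icc (0:ℝ) T) →
        IntegrableOn y (Icc (0:ℝ) T) →
        (∫ t in Icc (0:ℝ) T, a t) ≤ A → (∫ t in Icc (0:ℝ) T, b t) ≤ B →
        (∫ t in Icc (0:ℝ) T, y t) ≤ D →
        (∀ t ∈ Icc (0:ℝ) T, HasDerivAt y (y' t) t) →
        (∀ᵐ t ∂(volume.restrict (Icc (0:ℝ) T)),
          y' t ≤ a t + b t * y t + C₁ * (y t) ^ 2) →
        y 0 ≤ y0 →
        ∀ t ∈ Icc (0:ℝ) T, y t ≤ C :=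
  stmt17_general y0 A B C₁ D hy0 hA hC₁
end
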